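/- arXiv:math/9810007 — 2 statements merged into one kernel-verified Lean document; each statement's English description precedes it below -/
import Mathlib

section
/- Let n ≥ 1. The group G_n is isomorphic (as a group) to the direct product ℤ × ℤ/nℤ. -/
/-!
The relator `b₁b₂` gives `b₂ = b₁⁻¹`; then `b₁b₂a₂ⁿ` gives `a₂ⁿ = 1`, `b₂a₂a₁b₁` (a conjugate
of `a₂a₁`) gives `a₁ = a₂⁻¹`, and `b₂a₂b₂⁻¹a₁` says that `b₁` and `a₂` commute. Hence `(k, c) ↦ b₁ᵏa₂ᶜ`
is a homomorphism `ℤ × ℤ/nℤ → G_n`, and it is inverse to the homomorphism `G_n → ℤ × ℤ/nℤ`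
sending `a₁, b₁, a₂, b₂` to `(0, -1), (1, 0), (0, 1), (-1, 0)`, which kills all eight relators.
-/

/-- The relators of the presentation of `G_n = π₁(B_n)`: generators
`a₁ = 0`, `b₁ = 1`, `a₂ = 2`, `b₂ = 3`. -/
def gnRels (n : ℕ) : Set (FreeGroup (Fin 4)) :=
  letI a₁ := FreeGroup.of (0 : Fin 4)
  letI b₁ := FreeGroup.of (1 : Fin 4)
  letI a₂ := FreeGroup.of (2 : Fin 4)
  letI b₂ := FreeGroup.of (3 : Fin 4)
  { (a₁ * b₁ * a₁⁻¹ * b₁⁻¹) * (a₂ * b₂ * a₂⁻¹ * b₂⁻¹),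
    b₁ * b₂,
    a₁ * b₁ * a₁⁻¹ * b₁⁻¹,
    a₂ * b₂ * a₂⁻¹ * b₂⁻¹,
    b₂ * a₂ * b₂⁻¹ * a₁,
    b₂ * a₂ * a₁ * b₁,
    b₁ * b₂ * a₂ ^ n,
    b₂ * a₂ ^ (n + 1) * a₁ * b₁ }

open Multiplicative

section IntProdZModLift

variable {G : Type*} [Group G] {n : ℕ}

theorem zpow_zmod_cast_add {y : G} (hy : y ^ n = 1) (c d : ZMod n) :
    y ^ ((c + d).cast : ℤ) = y ^ (c.cast : ℤ) * y ^ (d.cast : ℤ) := by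
  rw [ZMod.intCast_cast_add, ← zpow_eq_zpow_emod' _ hy, zpow_add]

theorem zpow_zmod_cast_intCast {y : G} (hy : y ^ n = 1) (k : ℤ) :
    y ^ ((k : ZMod n).cast : ℤ) = y ^ k := by
  rw [ZMod.coe_intCast, ← zpow_eq_zpow_emod' _ hy]

def intProdZModLift (x y : G) (hxy : Commute x y) (hy : y ^ n = 1) :
    Multiplicative (ℤ × ZMod n) →* G where
  toFun z := x ^ z.toAdd.1 * y ^ (z.toAdd.2.cast : ℤ)
  map_one' := by simp
  map_mul' z w := by
    simp only [toAdd_mul, Prod.fst_add, Prod.snd_add, zpow_add, zpow_zmod_cast_add hy]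
    exact (hxy.zpow_zpow _ _).mul_mul_mul_comm _ _

theorem intProdZModLift_ofAdd (x y : G) (hxy : Commute x y) (hy : y ^ n = 1) (k : ℤ) (c : ZMod n) :
    intProdZModLift x y hxy hy (ofAdd (k, c)) = x ^ k * y ^ (c.cast : ℤ) := rfl

end IntProdZModLift

namespace Gn

def a₁ (n : ℕ) : PresentedGroup (gnRels n) := .of 0
def b₁ (n : ℕ) : PresentedGroup (gnRels n) := .of 1
def a₂ (n : ℕ) : PresentedGroup (gnRels n) := .of 2
def b₂ (n : ℕ) : PresentedGroup (gnRels n) := .of 3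

variable {n : ℕ}

theorem b₂_eq : b₂ n = (b₁ n)⁻¹ := by
  have h : b₁ n * b₂ n = 1 := PresentedGroup.one_of_mem (x := .of 1 * .of 3) (by simp [gnRels])
  exact eq_inv_of_mul_eq_one_right h

theorem a₂_pow : a₂ n ^ n = 1 := by
  have h : b₁ n * b₂ n * a₂ n ^ n = 1 :=
    PresentedGroup.one_of_mem (x := .of 1 * .of 3 * .of 2 ^ n) (by simp [gnRels])
  rwa [b₂_eq, mul_inv_cancel, one_mul] at h

theorem a₁_eq : a₁ n = (a₂ n)⁻¹ := by
  have h : b₂ n * a₂ n * a₁ n * b₁ n = 1 :=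
    PresentedGroup.one_of_mem (x := .of 3 * .of 2 * .of 0 * .of 1) (by simp [gnRels])
  rw [b₂_eq, mul_eq_one_iff_eq_inv, mul_assoc, mul_eq_left] at h
  exact eq_inv_of_mul_eq_one_right h

theorem commute_b₁_a₂ : Commute (b₁ n) (a₂ n) := by
  have h : b₂ n * a₂ n * (b₂ n)⁻¹ * a₁ n = 1 :=
    PresentedGroup.one_of_mem (x := .of 3 * .of 2 * (.of 3)⁻¹ * .of 0) (by simp [gnRels])
  rw [b₂_eq, a₁_eq, inv_inv, mul_inv_eq_one, mul_assoc, inv_mul_eq_iff_eq_mul] at h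
  exact h.symm

def toIntProdZMod (n : ℕ) : PresentedGroup (gnRels n) →* Multiplicative (ℤ × ZMod n) :=
  PresentedGroup.toGroup (f := fun i => ofAdd (![(0, -1), (1, 0), (0, 1), (-1, 0)] i)) <| by
    intro r hr
    simp only [gnRels, Set.mem_insert_iff, Set.mem_singleton_iff] at hr
    rcases hr with rfl | rfl | rfl | rfl | rfl | rfl | rfl | rfl <;>
      · apply toAdd.injective
        simp [Prod.ext_iff]

theorem toIntProdZMod_b₁ : toIntProdZMod n (b₁ n) = ofAdd (1, 0) :=
  PresentedGroup.toGroup.of _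

theorem toIntProdZMod_a₂ : toIntProdZMod n (a₂ n) = ofAdd (0, 1) :=
  PresentedGroup.toGroup.of _

def ofIntProdZMod (n : ℕ) : Multiplicative (ℤ × ZMod n) →* PresentedGroup (gnRels n) :=
  intProdZModLift (b₁ n) (a₂ n) commute_b₁_a₂ a₂_pow

theorem ofIntProdZMod_comp_toIntProdZMod :
    (ofIntProdZMod n).comp (toIntProdZMod n) = MonoidHom.id _ := by
  have hb₁ : ofIntProdZMod n (toIntProdZMod n (b₁ n)) = b₁ n := by
    simp [toIntProdZMod_b₁, ofIntProdZMod, intProdZModLift_ofAdd]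
  have ha₂ : ofIntProdZMod n (toIntProdZMod n (a₂ n)) = a₂ n := by
    rw [toIntProdZMod_a₂, ofIntProdZMod, intProdZModLift_ofAdd, zpow_zero, one_mul,
      ← Int.cast_one, zpow_zmod_cast_intCast a₂_pow, zpow_one]
  refine PresentedGroup.ext fun i => ?_
  fin_cases i
  · change ofIntProdZMod n (toIntProdZMod n (a₁ n)) = a₁ n
    simp only [a₁_eq, map_inv, ha₂]
  · exact hb₁
  · exact ha₂
  · change ofIntProdZMod n (toIntProdZMod n (b₂ n)) = b₂ n
    simp only [b₂_eq, map_inv, hb₁]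

theorem toIntProdZMod_ofIntProdZMod (k : ℤ) (c : ZMod n) :
    toIntProdZMod n (ofIntProdZMod n (ofAdd (k, c))) = ofAdd (k, c) := by
  rw [ofIntProdZMod, intProdZModLift_ofAdd, map_mul, map_zpow, map_zpow, toIntProdZMod_b₁,
    toIntProdZMod_a₂, ← ofAdd_zsmul, ← ofAdd_zsmul, ← ofAdd_add]
  simp

theorem toIntProdZMod_comp_ofIntProdZMod :
    (toIntProdZMod n).comp (ofIntProdZMod n) = MonoidHom.id _ :=
  MonoidHom.ext fun z => toIntProdZMod_ofIntProdZMod z.toAdd.1 z.toAdd.2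

end Gn

theorem Gn_iso_int_prod_zmod_general (n : ℕ) :
    Nonempty (PresentedGroup (gnRels n) ≃* Multiplicative (ℤ × ZMod n)) :=
  ⟨(Gn.toIntProdZMod n).toMulEquiv (Gn.ofIntProdZMod n) Gn.ofIntProdZMod_comp_toIntProdZMod
    Gn.toIntProdZMod_comp_ofIntProdZMod⟩

theorem Gn_iso_int_prod_zmod (n : ℕ) (hn : 1 ≤ n) :
    Nonempty (PresentedGroup (gnRels n) ≃* Multiplicative (ℤ × ZMod n)) :=
  Gn_iso_int_prod_zmod_general n
end

section
/- Let n ≥ 1. The group G_n is isomorphic to the group presented by two generators a, b with relators aba⁻¹b⁻¹ and aⁿ. -/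
/-- The relators `a b a⁻¹ b⁻¹` and `aⁿ` on the free group with generators
`a = 0`, `b = 1`. -/
def twoGenRels (n : ℕ) : Set (FreeGroup (Fin 2)) :=
  letI a := FreeGroup.of (0 : Fin 2)
  letI b := FreeGroup.of (1 : Fin 2)
  { a * b * a⁻¹ * b⁻¹, a ^ n }

/-!
A quadruple `(x₁, y₁, x₂, y₂)` in any group satisfies the relators of `G_n` exactly when
`x₁ = x₂⁻¹`, `y₁ = y₂⁻¹`, `x₂` commutes with `y₂` and `x₂ⁿ = 1`, i.e. when `(x₂, y₂)` satisfies
the relators of the two-generator group. Hence `a₁ ↦ a⁻¹, b₁ ↦ b⁻¹, a₂ ↦ a, b₂ ↦ b` and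
`a ↦ a₂, b ↦ b₂` define mutually inverse homomorphisms.
-/

namespace PresentedGroup

variable {α β : Type*} {rels : Set (FreeGroup α)} {rels' : Set (FreeGroup β)}

theorem lift_of_eq_one : ∀ r ∈ rels, FreeGroup.lift (of : α → PresentedGroup rels) r = 1 := by
  have : FreeGroup.lift (of : α → PresentedGroup rels) = mk rels :=
    FreeGroup.ext_hom _ _ fun _ => FreeGroup.lift_apply_of
  exact fun r hr => this ▸ one_of_mem hr

def mulEquivOfToGroup {f : α → PresentedGroup rels'} {g : β → PresentedGroup rels}
    (hf : ∀ r ∈ rels, FreeGroup.lift f r = 1) (hg : ∀ r ∈ rels', FreeGroup.lift g r = 1)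
    (hgf : ∀ x, toGroup hg (f x) = of x) (hfg : ∀ y, toGroup hf (g y) = of y) :
    PresentedGroup rels ≃* PresentedGroup rels' :=
  (toGroup hf).toMulEquiv (toGroup hg) (ext fun x => by simp [hgf]) (ext fun y => by simp [hfg])

end PresentedGroup

section

variable {G : Type*} [Group G]

theorem mul_mul_inv_mul_inv_eq_one_iff_commute {x y : G} :
    x * y * x⁻¹ * y⁻¹ = 1 ↔ Commute x y := by
  rw [← commutatorElement_def, commutatorElement_eq_one_iff_commute]

theorem twoGenRels_lift_eq_one_iff (n : ℕ) (x y : G) :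
    (∀ r ∈ twoGenRels n, FreeGroup.lift ![x, y] r = 1) ↔ Commute x y ∧ x ^ n = 1 := by
  simp [twoGenRels, mul_mul_inv_mul_inv_eq_one_iff_commute]

theorem gnRels_lift_eq_one_iff (n : ℕ) (x₁ y₁ x₂ y₂ : G) :
    (∀ r ∈ gnRels n, FreeGroup.lift ![x₁, y₁, x₂, y₂] r = 1) ↔
      x₁ = x₂⁻¹ ∧ y₁ = y₂⁻¹ ∧ Commute x₂ y₂ ∧ x₂ ^ n = 1 := by
  simp only [gnRels, Set.forall_mem_insert, Set.mem_singleton_iff, forall_eq, map_mul, map_inv,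
    map_pow, FreeGroup.lift_apply_of, Matrix.cons_val, mul_mul_inv_mul_inv_eq_one_iff_commute]
  constructor
  · rintro ⟨-, hy, -, hxy, hx, -, hpow, -⟩
    rw [← hxy.eq, mul_inv_cancel_right] at hx
    rw [hy, one_mul] at hpow
    exact ⟨eq_inv_of_mul_eq_one_right hx, eq_inv_of_mul_eq_one_left hy, hxy, hpow⟩
  · rintro ⟨rfl, rfl, hxy, hx⟩
    refine ⟨?_, inv_mul_cancel y₂, hxy.inv_inv, hxy,
      mul_mul_inv_mul_inv_eq_one_iff_commute.2 hxy.symm, by group,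
      by rw [inv_mul_cancel, one_mul, hx], by rw [pow_succ, hx]; group⟩
    rw [mul_mul_inv_mul_inv_eq_one_iff_commute.2 hxy.inv_inv,
      mul_mul_inv_mul_inv_eq_one_iff_commute.2 hxy, one_mul]

end

theorem Gn_iso_twoGen_general (n : ℕ) :
    Nonempty (PresentedGroup (gnRels n) ≃* PresentedGroup (twoGenRels n)) := by
  let a : PresentedGroup (twoGenRels n) := .of 0
  let b : PresentedGroup (twoGenRels n) := .of 1
  let x₁ : PresentedGroup (gnRels n) := .of 0
  let y₁ : PresentedGroup (gnRels n) := .of 1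
  let x₂ : PresentedGroup (gnRels n) := .of 2
  let y₂ : PresentedGroup (gnRels n) := .of 3
  obtain ⟨hab, ha⟩ := (twoGenRels_lift_eq_one_iff n a b).1 <| by
    rw [show ![a, b] = .of from FinVec.etaExpand_eq PresentedGroup.of]
    exact PresentedGroup.lift_of_eq_one
  obtain ⟨hx₁, hy₁, hxy, hx⟩ := (gnRels_lift_eq_one_iff n x₁ y₁ x₂ y₂).1 <| by
    rw [show ![x₁, y₁, x₂, y₂] = .of from FinVec.etaExpand_eq PresentedGroup.of]
    exact PresentedGroup.lift_of_eq_one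
  refine ⟨PresentedGroup.mulEquivOfToGroup
    ((gnRels_lift_eq_one_iff n a⁻¹ b⁻¹ a b).2 ⟨rfl, rfl, hab, ha⟩)
    ((twoGenRels_lift_eq_one_iff n x₂ y₂).2 ⟨hxy, hx⟩) (fun i => ?_) (fun i => ?_)⟩
  · fin_cases i <;> simp [a, b, x₁, y₁, x₂, y₂, hx₁, hy₁]
  · fin_cases i <;> simp [a, b, x₂, y₂]

theorem Gn_iso_twoGen (n : ℕ) (hn : 1 ≤ n) :
    Nonempty (PresentedGroup (gnRels n) ≃* PresentedGroup (twoGenRels n)) :=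
  Gn_iso_twoGen_general n
end
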